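/- arXiv:2302.07510 — 3 statements merged into one kernel-verified Lean document; each statement's English description precedes it below -/
import Mathlib

section
/- Let μ : ℕ → ℝ be non-decreasing and concave with increments γ(n) = μ(n+1) - μ(n). For T ∈ ℕ, N ≥ 2, and 1 ≤ h ≤ ⌊N/2⌋, with μ̃(N) := (1/h) · Σ_{l=N-h+1}^{N} [ μ(l) + (T - l)(μ(l) - μ(l-h))/h ], it holds that μ̃(N) - μ(T) ≤ (1/2)(2T - 2N + h - 1) · γ(N - 2h + 1). -/
theorem stmt_2 (μ : ℕ → ℝ) (γ : ℕ → ℝ)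
    (hγ : ∀ n, γ n = μ (n + 1) - μ n)
    (hmono : ∀ n, 0 ≤ γ n)
    (hconc : ∀ n, γ (n + 1) ≤ γ n)
    (T N h : ℕ) (hN : 2 ≤ N) (hNT : N ≤ T) (hh1 : 1 ≤ h) (hh2 : h ≤ N / 2) :
    (1 / (h : ℝ)) * (∑ l ∈ Finset.Icc (N - h + 1) N,
      (μ l + ((T : ℝ) - l) * (μ l - μ (l - h)) / h)) - μ T
      ≤ (1 / 2) * (2 * (T : ℝ) - 2 * N + h - 1) * γ (N - 2 * h + 1) := by
  have h2N : 2 * h ≤ N := by omega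
  have hh0 : (0:ℝ) < h := by exact_mod_cast hh1
  set c := γ (N - 2 * h + 1) with hc
  have hμmono : ∀ a b : ℕ, a ≤ b → μ a ≤ μ b := by
    intro a b hab
    have : Monotone μ := monotone_nat_of_le_succ (fun n => by
      have := hmono n; rw [hγ n] at this; linarith)
    exact this hab
  have hanti : Antitone γ := antitone_nat_of_succ_le hconc
  have tele : ∀ a k : ℕ, μ (a + k) - μ a = ∑ j ∈ Finset.range k, γ (a + j) := by
    intro a k
    induction k with
    | zero => simp
    | succ k ih =>
      rw [Finset.sum_range_succ, ← ih, hγ]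
      have : a + (k + 1) = a + k + 1 := by omega
      rw [this]; ring
  have key : ∀ l ∈ Finset.Icc (N - h + 1) N,
      μ l + ((T : ℝ) - l) * (μ l - μ (l - h)) / h ≤ μ T + ((T : ℝ) - l) * c := by
    intro l hl
    rw [Finset.mem_Icc] at hl
    have hlh : h ≤ l := by omega
    have h1 : μ l ≤ μ T := hμmono l T (by omega)
    have hdiff : μ l - μ (l - h) ≤ h * c := by
      have ht := tele (l - h) h
      rw [show l - h + h = l from by omega] at ht
      rw [ht]
      calc ∑ j ∈ Finset.range h, γ (l - h + j)
          ≤ ∑ _j ∈ Finset.range h, c :=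
            Finset.sum_le_sum (fun j _ => hanti (by omega))
        _ = h * c := by simp [mul_comm]
    have hTl : (0:ℝ) ≤ (T:ℝ) - l := by
      have : (l:ℝ) ≤ T := by exact_mod_cast (by omega : l ≤ T)
      linarith
    have h2 : ((T : ℝ) - l) * (μ l - μ (l - h)) / h ≤ ((T : ℝ) - l) * c := by
      rw [div_le_iff₀ hh0]
      calc ((T:ℝ)-l) * (μ l - μ (l-h)) ≤ ((T:ℝ)-l) * (h * c) :=
            mul_le_mul_of_nonneg_left hdiff hTl
        _ = ((T:ℝ)-l) * c * h := by ring
    linarith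
  have hgauss : ∀ n : ℕ, ∑ j ∈ Finset.range n, (j:ℝ) = n * (n - 1) / 2 := by
    intro n
    induction n with
    | zero => simp
    | succ n ih => rw [Finset.sum_range_succ, ih]; push_cast; ring
  have hbound : ∑ l ∈ Finset.Icc (N - h + 1) N, (μ T + ((T : ℝ) - l) * c)
      = h * μ T + c * (h * ((T:ℝ) - N) + h * (h - 1) / 2) := by
    rw [← Finset.Ico_add_one_right_eq_Icc, Finset.sum_Ico_eq_sum_range]
    have hcard : (N + 1) - (N - h + 1) = h := by omega
    rw [hcard]
    have hcast : ∀ j : ℕ, ((N - h + 1 + j : ℕ) : ℝ) = (N:ℝ) - h + 1 + j := by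
      intro j; push_cast [Nat.cast_sub (by omega : h ≤ N)]; ring
    simp_rw [hcast]
    rw [Finset.sum_add_distrib, Finset.sum_const, Finset.card_range]
    have : ∑ j ∈ Finset.range h, ((T:ℝ) - ((N:ℝ) - h + 1 + j)) * c
        = ∑ j ∈ Finset.range h, (((T:ℝ) - ((N:ℝ) - h + 1)) * c - (j:ℝ) * c) :=
      Finset.sum_congr rfl (fun j _ => by ring)
    rw [this, Finset.sum_sub_distrib, Finset.sum_const, Finset.card_range,
      ← Finset.sum_mul, hgauss]
    simp only [nsmul_eq_mul]
    ring
  have hsum := Finset.sum_le_sum key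
  have hle : (1 / (h : ℝ)) * (∑ l ∈ Finset.Icc (N - h + 1) N,
      (μ l + ((T : ℝ) - l) * (μ l - μ (l - h)) / h))
      ≤ (1 / (h : ℝ)) * (h * μ T + c * (h * ((T:ℝ) - N) + h * (h - 1) / 2)) := by
    rw [← hbound]
    exact mul_le_mul_of_nonneg_left hsum (by positivity)
  have heq : (1 / (h : ℝ)) * (h * μ T + c * (h * ((T:ℝ) - N) + h * (h - 1) / 2)) - μ T
      = (1 / 2) * (2 * (T : ℝ) - 2 * N + h - 1) * c := by
    field_simp
    ring
  linarith
end

section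
/- Let μ : ℕ → ℝ be non-decreasing and concave with increments γ(n) = μ(n+1) - μ(n). For T ∈ ℕ, N with 2 ≤ N ≤ T, and 1 ≤ h ≤ ⌊N/2⌋, with μ̄(N) := (1/h)·Σ_{l=N-h+1}^{N} μ(l), it holds that μ(T) - μ̄(N) ≤ (1/2)(2T - 2N + h - 1) · γ(N - h + 1). -/
theorem stmt_4 (μ : ℕ → ℝ) (γ : ℕ → ℝ)
    (hγ : ∀ n, γ n = μ (n + 1) - μ n)
    (hmono : ∀ n, 0 ≤ γ n)
    (hconc : ∀ n, γ (n + 1) ≤ γ n)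
    (T N h : ℕ) (hN : 2 ≤ N) (hNT : N ≤ T) (hh1 : 1 ≤ h) (hh2 : h ≤ N / 2) :
    μ T - (1 / (h : ℝ)) * ∑ l ∈ Finset.Icc (N - h + 1) N, μ l
      ≤ (1 / 2) * (2 * (T : ℝ) - 2 * N + h - 1) * γ (N - h + 1) := by
  have hhN : h ≤ N := le_trans hh2 (Nat.div_le_self N 2)
  set a := N - h + 1 with ha
  have haN : a ≤ N := by omega
  have hga : ∀ m, a ≤ m → γ m ≤ γ a := by
    intro m hm
    induction m with
    | zero => exact absurd hm (by omega)
    | succ n ih =>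
      rcases Nat.eq_or_lt_of_le hm with he | hlt
      · rw [← he]
      · exact le_trans (hconc n) (ih (Nat.lt_succ_iff.mp hlt))
  have key : ∀ k l, a ≤ l → μ (l + k) - μ l ≤ k * γ a := by
    intro k
    induction k with
    | zero => intro l _; simp
    | succ k ih =>
      intro l hl
      have h1 := ih l hl
      have h2 : γ (l + k) ≤ γ a := hga _ (by omega)
      have h3 := hγ (l + k)
      have e : l + (k + 1) = (l + k) + 1 := by omega
      rw [e]
      push_cast
      linarith
  have hb : ∀ l ∈ Finset.Icc a N, μ T - μ l ≤ ((T : ℝ) - l) * γ a := by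
    intro l hl
    simp only [Finset.mem_Icc] at hl
    have hlT : l ≤ T := le_trans hl.2 hNT
    have hk := key (T - l) l hl.1
    rw [Nat.add_sub_cancel' hlT] at hk
    calc μ T - μ l ≤ (↑(T - l)) * γ a := hk
    _ = ((T : ℝ) - l) * γ a := by rw [Nat.cast_sub hlT]
  have hcard : (Finset.Icc a N).card = h := by rw [Nat.card_Icc]; omega
  have hsum : ∑ l ∈ Finset.Icc a N, (μ T - μ l)
      ≤ (∑ l ∈ Finset.Icc a N, ((T : ℝ) - l)) * γ a := by
    rw [Finset.sum_mul]
    exact Finset.sum_le_sum hb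
  have haR : (a : ℝ) = (N : ℝ) - h + 1 := by
    rw [ha]
    push_cast [hhN]
    ring
  have hsumId : (∑ l ∈ Finset.Icc a N, (l : ℝ)) = (h : ℝ) * (N + a) / 2 := by
    rw [← Finset.Ico_add_one_right_eq_Icc, Finset.sum_Ico_eq_sum_range]
    have e2 : N + 1 - a = h := by omega
    rw [e2]
    have g1 := Finset.sum_range_id_mul_two h
    have g2 : (∑ i ∈ Finset.range h, (i : ℝ)) * 2 = (h : ℝ) * ((h : ℝ) - 1) := by
      have e3 : (((∑ i ∈ Finset.range h, i) * 2 : ℕ) : ℝ) = ((h * (h - 1) : ℕ) : ℝ) := by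
        rw [g1]
      push_cast [Nat.cast_sub hh1] at e3
      linarith
    push_cast [Nat.cast_sub hhN]
    rw [Finset.sum_add_distrib, Finset.sum_const, Finset.card_range, nsmul_eq_mul]
    nlinarith [g2]
  have hsumT : (∑ l ∈ Finset.Icc a N, ((T : ℝ) - l))
      = (h : ℝ) * T - (h : ℝ) * (N + a) / 2 := by
    rw [Finset.sum_sub_distrib, Finset.sum_const, hcard, nsmul_eq_mul, hsumId]
  have hsumL : ∑ l ∈ Finset.Icc a N, (μ T - μ l)
      = (h : ℝ) * μ T - ∑ l ∈ Finset.Icc a N, μ l := by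
    rw [Finset.sum_sub_distrib, Finset.sum_const, hcard, nsmul_eq_mul]
  have hpos : (0 : ℝ) < h := by exact_mod_cast hh1
  have hfin : (h : ℝ) * μ T - ∑ l ∈ Finset.Icc a N, μ l
      ≤ ((h : ℝ) * T - (h : ℝ) * (N + a) / 2) * γ a := by
    rw [← hsumL, ← hsumT]; exact hsum
  have key2 : μ T - (1 / (h : ℝ)) * ∑ l ∈ Finset.Icc a N, μ l
      = (1 / (h : ℝ)) * ((h : ℝ) * μ T - ∑ l ∈ Finset.Icc a N, μ l) := by
    field_simp
  rw [key2]
  calc (1 / (h : ℝ)) * ((h : ℝ) * μ T - ∑ l ∈ Finset.Icc a N, μ l)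
      ≤ (1 / (h : ℝ)) * (((h : ℝ) * T - (h : ℝ) * (N + a) / 2) * γ a) := by
        apply mul_le_mul_of_nonneg_left hfin (by positivity)
    _ = (1 / 2) * (2 * (T : ℝ) - 2 * N + h - 1) * γ a := by
        rw [haR]; field_simp; ring
end

section
/- Let μ : ℕ → ℝ be non-decreasing with increments γ(n) = μ(n+1) - μ(n) ≥ 0 that are non-increasing, and suppose γ(n) ≤ n^{-β} for some β > 1 and all n ≥ 1. Then for any T ∈ ℕ and N with 2 ≤ N ≤ T, with h = ⌊N/2⌋-width window, μ(T) - (1/h)·Σ_{l=N-h+1}^{N} μ(l) ≤ T · γ(⌊N/2⌋) ≤ T · ⌊N/2⌋^{-β}. -/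
theorem stmt_5 (μ : ℕ → ℝ) (γ : ℕ → ℝ) (β : ℝ) (hβ : 1 < β)
    (hγ : ∀ n, γ n = μ (n + 1) - μ n)
    (hmono : ∀ n, 0 ≤ γ n)
    (hconc : ∀ n, γ (n + 1) ≤ γ n)
    (hpoly : ∀ n : ℕ, 1 ≤ n → γ n ≤ (n : ℝ) ^ (-β))
    (T N : ℕ) (hN : 2 ≤ N) (hNT : N ≤ T) :
    μ T - (1 / ((N / 2 : ℕ) : ℝ)) *
        ∑ l ∈ Finset.Icc (N - N / 2 + 1) N, μ l ≤ (T : ℝ) * γ (N / 2)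
      ∧ (T : ℝ) * γ (N / 2) ≤ (T : ℝ) * ((N / 2 : ℕ) : ℝ) ^ (-β) := by
  have hhalf : 1 ≤ N / 2 := by omega
  set h := N / 2 with hhdef
  have hhN : h ≤ N := by omega
  have hanti : ∀ m n : ℕ, m ≤ n → γ n ≤ γ m := by
    intro m n hmn
    induction n with
    | zero => interval_cases m; exact le_refl _
    | succ n ih =>
      rcases Nat.lt_or_ge m (n + 1) with h1 | h2
      · exact (hconc n).trans (ih (by omega))
      · have : m = n + 1 := by omega
        subst this; exact le_refl _
  have hsum : ∀ n : ℕ, μ n = μ 0 + ∑ k ∈ Finset.range n, γ k := by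
    intro n
    induction n with
    | zero => simp
    | succ n ih => rw [Finset.sum_range_succ, hγ]; linarith
  have hdiff : ∀ l, l ≤ T → μ T - μ l = ∑ k ∈ Finset.Ico l T, γ k := by
    intro l hl
    rw [hsum T, hsum l, Finset.sum_Ico_eq_sub _ hl]; ring
  have hbound : ∀ l ∈ Finset.Icc (N - h + 1) N, μ T - μ l ≤ (T : ℝ) * γ h := by
    intro l hl
    simp only [Finset.mem_Icc] at hl
    have hhl : h ≤ l := by omega
    have hlT : l ≤ T := by omega
    rw [hdiff l hlT]
    calc ∑ k ∈ Finset.Ico l T, γ k ≤ ∑ _k ∈ Finset.Ico l T, γ h := by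
          apply Finset.sum_le_sum
          intro k hk
          exact hanti h k (le_trans hhl (Finset.mem_Ico.mp hk).1)
      _ = ((T - l : ℕ) : ℝ) * γ h := by
          rw [Finset.sum_const, Nat.card_Ico, nsmul_eq_mul]
      _ ≤ (T : ℝ) * γ h := by
          apply mul_le_mul_of_nonneg_right _ (hmono h)
          exact_mod_cast Nat.sub_le T l
  have hcard : (Finset.Icc (N - h + 1) N).card = h := by
    rw [Nat.card_Icc]; omega
  have hhpos : (0 : ℝ) < (h : ℝ) := by exact_mod_cast hhalf
  have key : (h : ℝ) * μ T - ∑ l ∈ Finset.Icc (N - h + 1) N, μ l ≤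
      (h : ℝ) * ((T : ℝ) * γ h) := by
    have := Finset.sum_le_sum hbound
    rw [Finset.sum_sub_distrib, Finset.sum_const, Finset.sum_const, hcard,
      nsmul_eq_mul, nsmul_eq_mul] at this
    linarith
  constructor
  · have e1 : μ T - (1 / (h : ℝ)) * ∑ l ∈ Finset.Icc (N - h + 1) N, μ l =
        (1 / (h : ℝ)) * ((h : ℝ) * μ T - ∑ l ∈ Finset.Icc (N - h + 1) N, μ l) := by
      field_simp
    rw [e1]
    calc (1 / (h : ℝ)) * ((h : ℝ) * μ T - ∑ l ∈ Finset.Icc (N - h + 1) N, μ l)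
        ≤ (1 / (h : ℝ)) * ((h : ℝ) * ((T : ℝ) * γ h)) :=
          mul_le_mul_of_nonneg_left key (by positivity)
      _ = (T : ℝ) * γ h := by field_simp
  · exact mul_le_mul_of_nonneg_left (hpoly h hhalf) (Nat.cast_nonneg T)
end
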